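/- Let X be a finite connected simple graph, let G be a subgroup of Aut(X), and let N be a normal subgroup of G such that X is an N-regular covering of the quotient graph X_N (that is, N acts semiregularly on V(X) and, for every vertex v of X, the orbit projection maps the neighborhood of v in X bijectively onto the neighborhood of the orbit of v in X_N). Since N is normal in G, G permutes the N-orbits and hence acts on X_N by automorphisms, with N acting trivially, so that G/N acts on X_N. Then X is G-half-arc-transitive if and only if X_N is (G/N)-half-arc-transitive. -/

import Mathlib

/-!
Since `N` is normal in `G`, every `g ∈ G` permutes the `N`-orbits, so the actions of `G` on
vertices, edges and arcs of `X` project to those of `G/N` on `X_N`. Conversely, if an element of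
`G/N` sends the orbit of `u` to that of `x`, composing a representative with an element of `N`
gives `g ∈ G` with `g u = x`; as the projection is injective on neighbourhoods, `g` then carries
an arc `(u, v)` to the unique arc at `x` over the image arc. So vertex-, edge- and
arc-transitivity each hold for `G` on `X` iff they hold for `G/N` on `X_N`.
-/

namespace HAT

variable {V : Type*} {W : Type*}

/-- The automorphism group of a simple graph, as a subgroup of the permutation
group of the vertex set. -/
def autSubgroup (X : SimpleGraph V) : Subgroup (Equiv.Perm V) where
  carrier := {g | ∀ u v : V, X.Adj (g u) (g v) ↔ X.Adj u v}
  one_mem' := by intro u v; simp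
  mul_mem' := by
    intro a b ha hb u v
    simp only [Equiv.Perm.mul_apply]
    rw [ha, hb]
  inv_mem' := by
    intro a ha u v
    have h := (ha (a⁻¹ u) (a⁻¹ v)).symm
    simpa using h

/-- A subgroup of the permutation group of the vertex set acts transitively on vertices. -/
def VertexTransitive (G : Subgroup (Equiv.Perm V)) : Prop :=
  ∀ u v : V, ∃ g ∈ G, g u = v

/-- `G` acts transitively on the edges of `X`. -/
def EdgeTransitive (X : SimpleGraph V) (G : Subgroup (Equiv.Perm V)) : Prop :=
  ∀ ⦃u v x y : V⦄, X.Adj u v → X.Adj x y →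
    ∃ g ∈ G, (g u = x ∧ g v = y) ∨ (g u = y ∧ g v = x)

/-- `G` acts transitively on the arcs of `X`. -/
def ArcTransitive (X : SimpleGraph V) (G : Subgroup (Equiv.Perm V)) : Prop :=
  ∀ ⦃u v x y : V⦄, X.Adj u v → X.Adj x y → ∃ g ∈ G, g u = x ∧ g v = y

/-- `G` acts sharply transitively (regularly) on the arcs of `X`. -/
def ArcRegular (X : SimpleGraph V) (G : Subgroup (Equiv.Perm V)) : Prop :=
  ∀ ⦃u v x y : V⦄, X.Adj u v → X.Adj x y →
    ∃! g : G, (g : Equiv.Perm V) u = x ∧ (g : Equiv.Perm V) v = y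

/-- `X` is `G`-half-arc-transitive. -/
def HalfArcTransitive (X : SimpleGraph V) (G : Subgroup (Equiv.Perm V)) : Prop :=
  VertexTransitive G ∧ EdgeTransitive X G ∧ ¬ ArcTransitive X G

/-- `X` is regular of degree `k`. -/
def RegularOfDegree (X : SimpleGraph V) (k : ℕ) : Prop :=
  ∀ v : V, Nat.card (X.neighborSet v) = k

/-- A group of permutations acts semiregularly: all point stabilizers are trivial. -/
def Semiregular (N : Subgroup (Equiv.Perm V)) : Prop :=
  ∀ g ∈ N, (∃ v : V, g v = v) → g = 1

/-- A graph is a Cayley graph iff its automorphism group contains a subgroup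
acting regularly (sharply transitively) on the vertices. -/
def IsCayleyGraph (X : SimpleGraph V) : Prop :=
  ∃ H : Subgroup (Equiv.Perm V), H ≤ autSubgroup X ∧
    ∀ u v : V, ∃! h : H, (h : Equiv.Perm V) u = v

/-- The set of `N`-orbits on the vertex set. -/
abbrev Orbits (N : Subgroup (Equiv.Perm V)) : Type _ := Quotient (MulAction.orbitRel N V)

/-- The `N`-orbit of a vertex. -/
def orbitMk (N : Subgroup (Equiv.Perm V)) (v : V) : Orbits N :=
  Quotient.mk (MulAction.orbitRel N V) v

/-- The quotient graph `X_N`: vertices are the `N`-orbits, two orbits being adjacent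
iff some vertex of one is adjacent in `X` to some vertex of the other. -/
def quotientGraph (X : SimpleGraph V) (N : Subgroup (Equiv.Perm V)) :
    SimpleGraph (Orbits N) :=
  SimpleGraph.fromRel (fun B C => ∃ u v : V, orbitMk N u = B ∧ orbitMk N v = C ∧ X.Adj u v)

/-- `X` is an `N`-regular covering of the quotient graph `X_N`: `N` is semiregular and
the orbit projection maps each neighbourhood bijectively onto the neighbourhood of the
corresponding orbit. -/
def IsRegularCover (X : SimpleGraph V) (N : Subgroup (Equiv.Perm V)) : Prop :=
  Semiregular N ∧
    ∀ v : V, Set.BijOn (orbitMk N) (X.neighborSet v)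
      ((quotientGraph X N).neighborSet (orbitMk N v))

/-- The permutations of the orbit set induced by elements of `G` (this is the image of
the natural action of `G/N` when `N` is normal in `G`). -/
def inducedQuotSubgroup (G N : Subgroup (Equiv.Perm V)) :
    Subgroup (Equiv.Perm (Orbits N)) where
  carrier := {σ | ∃ g ∈ G, ∀ u : V, σ (orbitMk N u) = orbitMk N (g u)}
  one_mem' := ⟨1, G.one_mem, fun u => by simp⟩
  mul_mem' := by
    rintro σ τ ⟨g, hg, hgs⟩ ⟨h, hh, hhs⟩
    refine ⟨g * h, G.mul_mem hg hh, fun u => ?_⟩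
    simp [Equiv.Perm.mul_apply, hhs u, hgs (h u)]
  inv_mem' := by
    rintro σ ⟨g, hg, hgs⟩
    refine ⟨g⁻¹, G.inv_mem hg, fun u => ?_⟩
    have h1 := hgs (g⁻¹ u)
    rw [show g (g⁻¹ u) = u from Equiv.apply_symm_apply g u] at h1
    rw [← h1, show σ⁻¹ (σ (orbitMk N (g⁻¹ u))) = orbitMk N (g⁻¹ u) from
      Equiv.symm_apply_apply σ _]

/-- A voltage assignment on the arcs of `Y` with values in the group `K`. -/
def IsVoltage (Y : SimpleGraph W) (K : Type*) [Group K] (ξ : W → W → K) : Prop :=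
  ∀ u v : W, Y.Adj u v → ξ v u = (ξ u v)⁻¹

/-- The derived graph `Y ×_ξ K` of a voltage assignment `ξ`. -/
def derivedGraph (Y : SimpleGraph W) {K : Type*} [Group K] (ξ : W → W → K) :
    SimpleGraph (W × K) :=
  SimpleGraph.fromRel (fun a b => Y.Adj a.1 b.1 ∧ b.2 = ξ a.1 b.1 * a.2)

/-- The graph `X(r; m, n)`: vertices `Z_m × Z_n`, with `(i,j)` adjacent to
`(i+1, j ± r^i)`. -/
def XG (m : ℕ) {n : ℕ} (r : (ZMod n)ˣ) : SimpleGraph (ZMod m × ZMod n) :=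
  SimpleGraph.fromRel (fun a b =>
    b.1 = a.1 + 1 ∧
      (b.2 = a.2 + (r : ZMod n) ^ (a.1.val) ∨ b.2 = a.2 - (r : ZMod n) ^ (a.1.val)))

/-- The Praeger–Xu graph `C(2;p,2)`: vertices `Z_p × Z_2 × Z_2`, with `(i,(x,y))`
adjacent to `(i+1,(y,z))`. -/
def Cp22 (p : ℕ) : SimpleGraph (ZMod p × ZMod 2 × ZMod 2) :=
  SimpleGraph.fromRel (fun a b => b.1 = a.1 + 1 ∧ b.2.1 = a.2.2)

/-- The lexicographic product `C_n[2K_1]`: vertices `Z_n × Z_2`, with `(i,x)`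
adjacent to `(j,y)` iff `j = i ± 1`. -/
def cyc2K1 (n : ℕ) : SimpleGraph (ZMod n × ZMod 2) :=
  SimpleGraph.fromRel (fun a b => b.1 = a.1 + 1)

/-- The wreath graph `W(6,2)`: vertices `Z_6 × Z_2`, with `(i,x)` adjacent to `(i+1,y)`. -/
def W62 : SimpleGraph (ZMod 6 × ZMod 2) :=
  SimpleGraph.fromRel (fun a b => b.1 = a.1 + 1)

/-- Base relation for the Rose Window graph `R_6(5,4)`: `inl i` is `S_i`, `inr i` is `Q_i`. -/
def roseR : (ZMod 6 ⊕ ZMod 6) → (ZMod 6 ⊕ ZMod 6) → Prop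
  | Sum.inl i, Sum.inl j => j = i + 1
  | Sum.inl i, Sum.inr j => j = i ∨ i = j + 5
  | Sum.inr i, Sum.inr j => j = i + 4
  | Sum.inr _, Sum.inl _ => False

/-- The Rose Window graph `R_6(5,4)`. -/
def roseWindow : SimpleGraph (ZMod 6 ⊕ ZMod 6) := SimpleGraph.fromRel roseR

/-- An elementary abelian `q`-group. -/
def IsElementaryAbelian (q : ℕ) (H : Type*) [Group H] : Prop :=
  (∀ a b : H, a * b = b * a) ∧ ∀ x : H, x ≠ 1 → orderOf x = q

section RegularCover

variable {X : SimpleGraph V} {G N : Subgroup (Equiv.Perm V)}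

lemma orbitMk_surjective : Function.Surjective (orbitMk N) :=
  Quotient.mk_surjective

lemma orbitMk_eq_orbitMk_iff {u v : V} : orbitMk N u = orbitMk N v ↔ ∃ n ∈ N, n v = u := by
  rw [orbitMk, orbitMk, Quotient.eq, MulAction.orbitRel_apply, MulAction.mem_orbit_iff]
  exact ⟨fun ⟨n, h⟩ => ⟨n, n.2, h⟩, fun ⟨n, hn, h⟩ => ⟨⟨n, hn⟩, h⟩⟩

lemma orbitMk_apply_eq_orbitMk_apply_iff {g : Equiv.Perm V} (hg : g ∈ Subgroup.normalizer N)
    {u v : V} :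
    orbitMk N (g u) = orbitMk N (g v) ↔ orbitMk N u = orbitMk N v := by
  simp only [orbitMk_eq_orbitMk_iff]
  constructor
  · rintro ⟨n, hn, h⟩
    exact ⟨g⁻¹ * n * g, (Subgroup.mem_normalizer_iff''.mp hg n).mp hn, by simp [h]⟩
  · rintro ⟨n, hn, h⟩
    exact ⟨g * n * g⁻¹, (Subgroup.mem_normalizer_iff.mp hg n).mp hn, by simp [h]⟩

lemma exists_mem_inducedQuotSubgroup (hGN : G ≤ Subgroup.normalizer N) {g : Equiv.Perm V}
    (hg : g ∈ G) :
    ∃ σ ∈ inducedQuotSubgroup G N, ∀ u, σ (orbitMk N u) = orbitMk N (g u) :=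
  ⟨Quotient.congr g fun _ _ => Quotient.eq.symm.trans
      ((orbitMk_apply_eq_orbitMk_apply_iff (hGN hg)).symm.trans Quotient.eq),
    ⟨g, hg, fun _ => rfl⟩, fun _ => rfl⟩

lemma exists_lift_of_mem_inducedQuotSubgroup (hNG : N ≤ G) {σ : Equiv.Perm (Orbits N)}
    (hσ : σ ∈ inducedQuotSubgroup G N) {u x : V} (hux : σ (orbitMk N u) = orbitMk N x) :
    ∃ g ∈ G, g u = x ∧ ∀ w, σ (orbitMk N w) = orbitMk N (g w) := by
  obtain ⟨g, hg, hσg⟩ := hσ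
  obtain ⟨n, hn, hngu⟩ := orbitMk_eq_orbitMk_iff.mp ((hσg u).symm.trans hux).symm
  refine ⟨n * g, G.mul_mem (hNG hn) hg, hngu, fun w => (hσg w).trans ?_⟩
  exact orbitMk_eq_orbitMk_iff.mpr ⟨n⁻¹, N.inv_mem hn, by simp⟩

lemma exists_adj_of_quotientGraph_adj {B C : Orbits N} (h : (quotientGraph X N).Adj B C) :
    ∃ u v : V, orbitMk N u = B ∧ orbitMk N v = C ∧ X.Adj u v := by
  obtain ⟨-, h | ⟨u, v, hu, hv, huv⟩⟩ := (SimpleGraph.fromRel_adj _ _ _).mp h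
  · exact h
  · exact ⟨v, u, hv, hu, huv.symm⟩

lemma IsRegularCover.adj_orbitMk (hcover : IsRegularCover X N) {u v : V} (huv : X.Adj u v) :
    (quotientGraph X N).Adj (orbitMk N u) (orbitMk N v) :=
  (hcover.2 u).mapsTo huv

lemma IsRegularCover.eq_of_orbitMk_eq (hcover : IsRegularCover X N) {u v v' : V}
    (huv : X.Adj u v) (huv' : X.Adj u v') (h : orbitMk N v = orbitMk N v') : v = v' :=
  (hcover.2 u).injOn huv huv' h

lemma exists_map_arc_iff (hG : G ≤ autSubgroup X) (hNG : N ≤ G)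
    (hGN : G ≤ Subgroup.normalizer N)
    (hcover : IsRegularCover X N) {u v x y : V} (huv : X.Adj u v) (hxy : X.Adj x y) :
    (∃ σ ∈ inducedQuotSubgroup G N,
        σ (orbitMk N u) = orbitMk N x ∧ σ (orbitMk N v) = orbitMk N y) ↔
      ∃ g ∈ G, g u = x ∧ g v = y := by
  constructor
  · rintro ⟨σ, hσ, hux, hvy⟩
    obtain ⟨g, hg, hgu, hσg⟩ := exists_lift_of_mem_inducedQuotSubgroup hNG hσ hux
    refine ⟨g, hg, hgu, hcover.eq_of_orbitMk_eq ?_ hxy ?_⟩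
    · rw [← hgu]
      exact (hG hg u v).mpr huv
    · rw [← hσg, hvy]
  · rintro ⟨g, hg, rfl, rfl⟩
    obtain ⟨σ, hσ, hσg⟩ := exists_mem_inducedQuotSubgroup hGN hg
    exact ⟨σ, hσ, hσg u, hσg v⟩

lemma vertexTransitive_inducedQuotSubgroup_iff (hNG : N ≤ G) (hGN : G ≤ Subgroup.normalizer N) :
    VertexTransitive (inducedQuotSubgroup G N) ↔ VertexTransitive G := by
  constructor
  · intro h u x
    obtain ⟨σ, hσ, hux⟩ := h (orbitMk N u) (orbitMk N x)
    obtain ⟨g, hg, hgu, -⟩ := exists_lift_of_mem_inducedQuotSubgroup hNG hσ hux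
    exact ⟨g, hg, hgu⟩
  · intro h B C
    obtain ⟨u, rfl⟩ := orbitMk_surjective B
    obtain ⟨x, rfl⟩ := orbitMk_surjective C
    obtain ⟨g, hg, rfl⟩ := h u x
    obtain ⟨σ, hσ, hσg⟩ := exists_mem_inducedQuotSubgroup hGN hg
    exact ⟨σ, hσ, hσg u⟩

lemma arcTransitive_quotientGraph_iff (hG : G ≤ autSubgroup X) (hNG : N ≤ G)
    (hGN : G ≤ Subgroup.normalizer N) (hcover : IsRegularCover X N) :
    ArcTransitive (quotientGraph X N) (inducedQuotSubgroup G N) ↔ ArcTransitive X G := by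
  constructor
  · intro h u v x y huv hxy
    exact (exists_map_arc_iff hG hNG hGN hcover huv hxy).mp
      (h (hcover.adj_orbitMk huv) (hcover.adj_orbitMk hxy))
  · intro h B C D E hBC hDE
    obtain ⟨u, v, rfl, rfl, huv⟩ := exists_adj_of_quotientGraph_adj hBC
    obtain ⟨x, y, rfl, rfl, hxy⟩ := exists_adj_of_quotientGraph_adj hDE
    exact (exists_map_arc_iff hG hNG hGN hcover huv hxy).mpr (h huv hxy)

lemma edgeTransitive_quotientGraph_iff (hG : G ≤ autSubgroup X) (hNG : N ≤ G)
    (hGN : G ≤ Subgroup.normalizer N) (hcover : IsRegularCover X N) :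
    EdgeTransitive (quotientGraph X N) (inducedQuotSubgroup G N) ↔ EdgeTransitive X G := by
  constructor
  · intro h u v x y huv hxy
    obtain ⟨σ, hσ, hσuv | hσuv⟩ := h (hcover.adj_orbitMk huv) (hcover.adj_orbitMk hxy)
    · obtain ⟨g, hg, hguv⟩ :=
        (exists_map_arc_iff hG hNG hGN hcover huv hxy).mp ⟨σ, hσ, hσuv⟩
      exact ⟨g, hg, .inl hguv⟩
    · obtain ⟨g, hg, hguv⟩ :=
        (exists_map_arc_iff hG hNG hGN hcover huv hxy.symm).mp ⟨σ, hσ, hσuv⟩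
      exact ⟨g, hg, .inr hguv⟩
  · intro h B C D E hBC hDE
    obtain ⟨u, v, rfl, rfl, huv⟩ := exists_adj_of_quotientGraph_adj hBC
    obtain ⟨x, y, rfl, rfl, hxy⟩ := exists_adj_of_quotientGraph_adj hDE
    obtain ⟨g, hg, hguv | hguv⟩ := h huv hxy
    · obtain ⟨σ, hσ, hσuv⟩ :=
        (exists_map_arc_iff hG hNG hGN hcover huv hxy).mpr ⟨g, hg, hguv⟩
      exact ⟨σ, hσ, .inl hσuv⟩
    · obtain ⟨σ, hσ, hσuv⟩ :=
        (exists_map_arc_iff hG hNG hGN hcover huv hxy.symm).mpr ⟨g, hg, hguv⟩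
      exact ⟨σ, hσ, .inr hσuv⟩

end RegularCover

theorem stmt0_general {V : Type*} (X : SimpleGraph V)
    (G N : Subgroup (Equiv.Perm V)) (hG : G ≤ autSubgroup X) (hNG : N ≤ G)
    (hnorm : ∀ g ∈ G, ∀ n ∈ N, g * n * g⁻¹ ∈ N)
    (hcover : IsRegularCover X N) :
    HalfArcTransitive X G ↔
      HalfArcTransitive (quotientGraph X N) (inducedQuotSubgroup G N) := by
  have hGN : G ≤ Subgroup.normalizer N := (Subgroup.normal_subgroupOf_iff_le_normalizer hNG).mp
    ((Subgroup.normal_subgroupOf_iff hNG).mpr fun n g hn hg => hnorm g hg n hn)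
  rw [HalfArcTransitive, HalfArcTransitive, vertexTransitive_inducedQuotSubgroup_iff hNG hGN,
    edgeTransitive_quotientGraph_iff hG hNG hGN hcover,
    arcTransitive_quotientGraph_iff hG hNG hGN hcover]

/-- For a connected graph `X`, a group `G ≤ Aut X`, and a normal subgroup
`N ⊴ G` such that `X` is an `N`-regular covering of `X_N`, the graph `X` is
`G`-half-arc-transitive iff `X_N` is `(G/N)`-half-arc-transitive. -/
theorem stmt0 {V : Type*} [Fintype V] (X : SimpleGraph V) (hconn : X.Connected)
    (G N : Subgroup (Equiv.Perm V)) (hG : G ≤ autSubgroup X) (hNG : N ≤ G)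
    (hnorm : ∀ g ∈ G, ∀ n ∈ N, g * n * g⁻¹ ∈ N)
    (hcover : IsRegularCover X N) :
    HalfArcTransitive X G ↔
      HalfArcTransitive (quotientGraph X N) (inducedQuotSubgroup G N) :=
  stmt0_general X G N hG hNG hnorm hcover

end HAT
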